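/- Let r ≥ 1 and let Q, R be positive reals with QR = X. If n is a positive integer with Q < n ≤ X, then Λ_r(n) = ∑_{d | n, d ≤ R} μ(d)(log(n/d))^r − ∑_{lm | n, m ≤ R, l ≤ Q} μ(m)Λ_r(l). -/

import Mathlib

/-- Generalized von Mangoldt function of order `r`:
`Λ_r(n) = ∑_{d ∣ n} μ(d) (log(n/d))^r`. -/
noncomputable def genVonMangoldt (r : ℕ) (n : ℕ) : ℝ :=
  ∑ d ∈ n.divisors, (ArithmeticFunction.moebius d : ℝ) * (Real.log ((n / d : ℕ) : ℝ)) ^ r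

/-! Let `S(P) = ∑_{lm ∣ n, P(l, m)} μ(m) Λ_r(l)`. Summing over `l` first,
`∑_{l ∣ n/m} Λ_r(l) = log(n/m)^r`, so `S(m ≤ R)` is the first sum of the identity; summing over `m`
first, `∑_{m ∣ n/l} μ(m) = [l = n]`, so `S(l > Q) = Λ_r(n)` because `n > Q`. Finally
`S(m ≤ R) = S(m ≤ R, l ≤ Q) + S(l > Q)`, since `l > Q` already forces `m ≤ R` through
`lm ≤ n ≤ QR`. -/

open Finset ArithmeticFunction
open scoped ArithmeticFunction.Moebius

theorem sum_divisors_genVonMangoldt (r : ℕ) {n : ℕ} (hn : n ≠ 0) :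
    ∑ l ∈ n.divisors, genVonMangoldt r l = Real.log n ^ r := by
  refine (sum_eq_iff_sum_mul_moebius_eq (R := ℝ) (g := fun k => Real.log k ^ r)).2
    (fun k _ => ?_) n (Nat.pos_of_ne_zero hn)
  rw [Nat.sum_divisorsAntidiagonal (fun d e => (μ d : ℝ) * Real.log e ^ r), genVonMangoldt]

theorem sum_divisors_moebius (n : ℕ) :
    ∑ d ∈ n.divisors, (μ d : ℝ) = if n = 1 then 1 else 0 := by
  rcases n.eq_zero_or_pos with rfl | hn
  · simp
  have h := (sum_eq_iff_sum_mul_moebius_eq (R := ℝ) (f := fun k => if k = 1 then 1 else 0)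
    (g := fun _ => 1)).1 (fun k hk => by simp [Nat.pos_iff_ne_zero.1 hk]) n hn
  rw [Nat.sum_divisorsAntidiagonal (fun d _ => (μ d : ℝ) * 1)] at h
  simpa using h

theorem Nat.filter_mul_dvd_divisors {m n : ℕ} (hm : m ∣ n) (hn : n ≠ 0) :
    n.divisors.filter (fun l => l * m ∣ n) = (n / m).divisors := by
  have hm0 : m ≠ 0 := ne_zero_of_dvd_ne_zero hn hm
  ext l
  simp only [mem_filter, Nat.mem_divisors, Nat.div_ne_zero_iff_of_dvd hm,
    Nat.dvd_div_iff_mul_dvd hm, mul_comm m]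
  exact ⟨fun ⟨_, h⟩ => ⟨h, hn, hm0⟩, fun ⟨h, _⟩ => ⟨⟨dvd_of_mul_right_dvd h, hn⟩, h⟩⟩

def dvdPairs (n : ℕ) : Finset (ℕ × ℕ) :=
  (n.divisors ×ˢ n.divisors).filter (fun q => q.1 * q.2 ∣ n)

section dvdPairs

variable {M : Type*} [AddCommMonoid M] {n : ℕ}

theorem sum_dvdPairs_by_snd (f : ℕ × ℕ → M) (hn : n ≠ 0) :
    ∑ q ∈ dvdPairs n, f q = ∑ m ∈ n.divisors, ∑ l ∈ (n / m).divisors, f (l, m) := by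
  rw [dvdPairs, sum_filter, sum_product_right]
  refine sum_congr rfl fun m hm => ?_
  rw [← sum_filter, Nat.filter_mul_dvd_divisors (Nat.dvd_of_mem_divisors hm) hn]

theorem sum_dvdPairs_by_fst (f : ℕ × ℕ → M) (hn : n ≠ 0) :
    ∑ q ∈ dvdPairs n, f q = ∑ l ∈ n.divisors, ∑ m ∈ (n / l).divisors, f (l, m) := by
  rw [dvdPairs, sum_filter, sum_product]
  refine sum_congr rfl fun l hl => ?_
  simp_rw [mul_comm l]
  rw [← sum_filter, Nat.filter_mul_dvd_divisors (Nat.dvd_of_mem_divisors hl) hn]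

end dvdPairs

section genVonMangoldt

variable (r : ℕ) {n : ℕ} (p : ℕ → Prop) [DecidablePred p]

theorem sum_dvdPairs_filter_snd_moebius_mul_genVonMangoldt (hn : n ≠ 0) :
    ∑ q ∈ (dvdPairs n).filter (fun q => p q.2), (μ q.2 : ℝ) * genVonMangoldt r q.1 =
      ∑ m ∈ n.divisors.filter p, (μ m : ℝ) * Real.log (n / m : ℕ) ^ r := by
  rw [sum_filter, sum_dvdPairs_by_snd _ hn, sum_filter]
  refine sum_congr rfl fun m hm => ?_
  have hnm : n / m ≠ 0 := (Nat.div_ne_zero_iff_of_dvd (Nat.dvd_of_mem_divisors hm)).2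
    ⟨hn, (Nat.pos_of_mem_divisors hm).ne'⟩
  simp only [sum_ite_irrel, sum_const_zero]
  rw [← mul_sum, sum_divisors_genVonMangoldt r hnm]

theorem sum_dvdPairs_filter_fst_moebius_mul_genVonMangoldt (hn : n ≠ 0) :
    ∑ q ∈ (dvdPairs n).filter (fun q => p q.1), (μ q.2 : ℝ) * genVonMangoldt r q.1 =
      if p n then genVonMangoldt r n else 0 := by
  have hcollapse : ∀ l ∈ n.divisors,
      ∑ m ∈ (n / l).divisors, (μ m : ℝ) * genVonMangoldt r l =
        if n = l then genVonMangoldt r l else 0 := by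
    intro l hl
    rw [← sum_mul, sum_divisors_moebius]
    by_cases hnl : n = l
    · simp [hnl, Nat.div_self (Nat.pos_of_mem_divisors hl)]
    · have hdiv : n / l ≠ 1 := fun h =>
        hnl (Nat.eq_of_dvd_of_div_eq_one (Nat.dvd_of_mem_divisors hl) h).symm
      rw [if_neg hnl, if_neg hdiv, zero_mul]
  rw [sum_filter, sum_dvdPairs_by_fst _ hn]
  simp only [sum_ite_irrel, sum_const_zero]
  rw [← sum_filter, sum_congr rfl fun l hl => hcollapse l (mem_filter.1 hl).1, sum_ite_eq]
  simp [hn]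

end genVonMangoldt

theorem genVonMangoldt_vaughan_general (r : ℕ) (Q R X : ℝ)
    (hR : 0 < R) (hX : Q * R = X) (n : ℕ) (hn : 0 < n)
    (h1 : Q < (n : ℝ)) (h2 : (n : ℝ) ≤ X) :
    genVonMangoldt r n =
      (∑ d ∈ n.divisors.filter (fun d : ℕ => (d : ℝ) ≤ R),
          (ArithmeticFunction.moebius d : ℝ) * (Real.log ((n / d : ℕ) : ℝ)) ^ r)
      - (∑ q ∈ (n.divisors ×ˢ n.divisors).filter
            (fun q => q.1 * q.2 ∣ n ∧ (q.2 : ℝ) ≤ R ∧ (q.1 : ℝ) ≤ Q),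
          (ArithmeticFunction.moebius q.2 : ℝ) * genVonMangoldt r q.1) := by
  set f : ℕ × ℕ → ℝ := fun q => (μ q.2 : ℝ) * genVonMangoldt r q.1
  -- `l * m ≤ n ≤ Q * R < l * R`
  have hsmall : ∀ q ∈ dvdPairs n, Q < q.1 → (q.2 : ℝ) ≤ R := by
    intro q hq hQl
    have hlm : ((q.1 * q.2 : ℕ) : ℝ) ≤ n := Nat.cast_le.2 (Nat.le_of_dvd hn (mem_filter.1 hq).2)
    push_cast at hlm
    nlinarith
  have hlarge : ∑ q ∈ ((dvdPairs n).filter fun q => (q.2 : ℝ) ≤ R).filter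
      (fun q => ¬ (q.1 : ℝ) ≤ Q), f q = genVonMangoldt r n := by
    rw [filter_filter]
    calc _ = ∑ q ∈ (dvdPairs n).filter (fun q => Q < (q.1 : ℝ)), f q :=
          sum_congr (filter_congr fun q hq =>
            ⟨fun h => not_le.1 h.2, fun h => ⟨hsmall q hq h, not_le.2 h⟩⟩) fun _ _ => rfl
      _ = genVonMangoldt r n := by
          rw [sum_dvdPairs_filter_fst_moebius_mul_genVonMangoldt r (fun l : ℕ => Q < l) hn.ne',
            if_pos h1]
  rw [← sum_dvdPairs_filter_snd_moebius_mul_genVonMangoldt r _ hn.ne',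
    ← sum_filter_add_sum_filter_not _ (fun q => (q.1 : ℝ) ≤ Q), hlarge, filter_filter, dvdPairs,
    filter_filter, add_sub_cancel_left]

theorem genVonMangoldt_vaughan (r : ℕ) (hr : 1 ≤ r) (Q R X : ℝ)
    (hQ : 0 < Q) (hR : 0 < R) (hX : Q * R = X) (n : ℕ) (hn : 0 < n)
    (h1 : Q < (n : ℝ)) (h2 : (n : ℝ) ≤ X) :
    genVonMangoldt r n =
      (∑ d ∈ n.divisors.filter (fun d : ℕ => (d : ℝ) ≤ R),
          (ArithmeticFunction.moebius d : ℝ) * (Real.log ((n / d : ℕ) : ℝ)) ^ r)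
      - (∑ q ∈ (n.divisors ×ˢ n.divisors).filter
            (fun q => q.1 * q.2 ∣ n ∧ (q.2 : ℝ) ≤ R ∧ (q.1 : ℝ) ≤ Q),
          (ArithmeticFunction.moebius q.2 : ℝ) * genVonMangoldt r q.1) :=
  genVonMangoldt_vaughan_general r Q R X hR hX n hn h1 h2
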